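/- Let n ≥ 1 and let F_1, …, F_n : ℝ^d → ℝ^d be operators with average F = (1/n)∑_{i=1}^n F_i. Suppose each F_i is ℓ-cocoercive and F is μ-strongly monotone. Take the stepsize γ = 2/(9ℓ) and any natural number K with K ≥ 10ℓ/μ. Then for every ε > 0 and every number of epochs S ≥ 1 satisfying (1/2)^S · ‖F(z̃⁰)‖² ≤ ε² (equivalently, S ≥ log₂(‖F(z̃⁰)‖²/ε²)), the SARAH outer-loop iterates satisfy 𝔼[‖F(z̃^S)‖²] ≤ ε². -/

import Mathlib

open Finset

noncomputable section

/-- An operator `G : ℝ^d → ℝ^d` is `ℓ`-cocoercive: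
`‖G(u) - G(v)‖² ≤ ℓ ⟨G(u) - G(v), u - v⟩` for all `u, v`. -/
def Cocoercive {d : ℕ} (ℓ : ℝ)
    (G : EuclideanSpace ℝ (Fin d) → EuclideanSpace ℝ (Fin d)) : Prop :=
  ∀ u v : EuclideanSpace ℝ (Fin d),
    ‖G u - G v‖ ^ 2 ≤ ℓ * (inner ℝ (G u - G v) (u - v) : ℝ)

/-- An operator `G : ℝ^d → ℝ^d` is `μ`-strongly monotone:
`⟨G(u) - G(v), u - v⟩ ≥ μ ‖u - v‖²` for all `u, v`. -/
def StronglyMonotone {d : ℕ} (μ : ℝ)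
    (G : EuclideanSpace ℝ (Fin d) → EuclideanSpace ℝ (Fin d)) : Prop :=
  ∀ u v : EuclideanSpace ℝ (Fin d),
    μ * ‖u - v‖ ^ 2 ≤ (inner ℝ (G u - G v) (u - v) : ℝ)

/-- The average operator `F = (1/n) ∑_{i=1}^n F_i`. -/
def opAvg {d n : ℕ} (F : Fin n → EuclideanSpace ℝ (Fin d) → EuclideanSpace ℝ (Fin d)) :
    EuclideanSpace ℝ (Fin d) → EuclideanSpace ℝ (Fin d) :=
  fun z => (n : ℝ)⁻¹ • ∑ i, F i z

/-- One step of the SARAH recursion: from `(z, v)` and index `i`, go to `(z', v')`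
with `z' = z - γ v` and `v' = F_i(z') - F_i(z) + v`. -/
def sarahStep {d n : ℕ} (γ : ℝ)
    (F : Fin n → EuclideanSpace ℝ (Fin d) → EuclideanSpace ℝ (Fin d)) (i : Fin n)
    (p : EuclideanSpace ℝ (Fin d) × EuclideanSpace ℝ (Fin d)) :
    EuclideanSpace ℝ (Fin d) × EuclideanSpace ℝ (Fin d) :=
  (p.1 - γ • p.2, F i (p.1 - γ • p.2) - F i p.1 + p.2)

/-- Run SARAH steps along a list of indices. -/
def sarahRun {d n : ℕ} (γ : ℝ)
    (F : Fin n → EuclideanSpace ℝ (Fin d) → EuclideanSpace ℝ (Fin d)) :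
    EuclideanSpace ℝ (Fin d) × EuclideanSpace ℝ (Fin d) → List (Fin n) →
      EuclideanSpace ℝ (Fin d) × EuclideanSpace ℝ (Fin d)
  | p, [] => p
  | p, i :: l => sarahRun γ F (sarahStep γ F i p) l

/-- The SARAH inner-loop trajectory `(z^k, v^k)` started at `z^0 = z0` with
`v^0 = F(z^0)`, for the index sequence `j : Fin K → Fin n` (so `i_k = j (k-1)`):
`sarahTraj γ F z0 j k = (z^k, v^k)` is obtained by performing the SARAH steps
with the first `k` indices `i_1, …, i_k`. -/
def sarahTraj {d n K : ℕ} (γ : ℝ)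
    (F : Fin n → EuclideanSpace ℝ (Fin d) → EuclideanSpace ℝ (Fin d))
    (z0 : EuclideanSpace ℝ (Fin d)) (j : Fin K → Fin n) (k : ℕ) :
    EuclideanSpace ℝ (Fin d) × EuclideanSpace ℝ (Fin d) :=
  sarahRun γ F (z0, opAvg F z0) ((List.ofFn j).take k)

/-- The SARAH outer loop: starting from `z̃`, each epoch runs the inner loop
(restarted with `v^0 = F(z̃)`) along its list of indices and moves to the endpoint. -/
def sarahOuter {d n : ℕ} (γ : ℝ)
    (F : Fin n → EuclideanSpace ℝ (Fin d) → EuclideanSpace ℝ (Fin d)) :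
    EuclideanSpace ℝ (Fin d) → List (List (Fin n)) → EuclideanSpace ℝ (Fin d)
  | z, [] => z
  | z, l :: ls => sarahOuter γ F (sarahRun γ F (z, opAvg F z) l).1 ls

/-!
With `ℓγ = 2/9`, cocoercivity of each `F_i` controls the increments `F_i(z⁺) - F_i(z)` of one
SARAH step by `-(2/9)⟨F(z⁺) - F(z), v⟩` on average over `i`, and strong monotonicity makes this
inner product at most `-μγ‖v‖²`. Hence the estimator contracts on average,
`𝔼‖v⁺‖² ≤ (1 - 16μγ/9)‖v‖²`, while `‖F(z) - v‖² + ‖v‖²/8` does not increase on average.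
Over an epoch of `K ≥ 10ℓ/μ` steps started at `v⁰ = F(z̃)` both `𝔼‖v^K‖²` and
`𝔼‖F(z^K) - v^K‖²` are at most `‖F(z̃)‖²/8`, so every epoch halves `𝔼‖F(z̃)‖²`.
-/

open scoped RealInnerProductSpace

section Averaging

variable {ι E : Type*} [Fintype ι] [NormedAddCommGroup E] [InnerProductSpace ℝ E]

lemma sum_norm_add_sq (g : ι → E) (v : E) :
    ∑ i, ‖g i + v‖ ^ 2 = ∑ i, ‖g i‖ ^ 2 + 2 * ⟪∑ i, g i, v⟫ + Fintype.card ι * ‖v‖ ^ 2 := by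
  simp only [norm_add_sq_real, sum_add_distrib, ← mul_sum, sum_inner, sum_const, card_univ,
    nsmul_eq_mul]

lemma sum_norm_sub_add_sq_le {g : ι → E} {m : E} (hm : ∑ i, g i = (Fintype.card ι : ℝ) • m)
    (a : E) : ∑ i, ‖(m - g i) + a‖ ^ 2 ≤ ∑ i, ‖g i‖ ^ 2 + Fintype.card ι * ‖a‖ ^ 2 := by
  have hdev : ∑ i, (m - g i) = 0 := by
    rw [sum_sub_distrib, hm, sum_const, card_univ, Nat.cast_smul_eq_nsmul, sub_self]
  have hvar : ∑ i, ‖m - g i‖ ^ 2 ≤ ∑ i, ‖g i‖ ^ 2 := by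
    have h := sum_norm_add_sq (fun i => -g i) m
    simp only [neg_add_eq_sub, norm_neg, sum_neg_distrib, hm, inner_neg_left,
      real_inner_smul_left, real_inner_self_eq_norm_sq] at h
    have hm2 : 0 ≤ (Fintype.card ι : ℝ) * ‖m‖ ^ 2 := by positivity
    linarith
  rw [sum_norm_add_sq, hdev, inner_zero_left]
  linarith

end Averaging

lemma sum_foldl_ofFn_le_pow_mul {α ι : Type*} [Fintype ι] (step : α → ι → α) (φ : α → ℝ)
    {c : ℝ} (hc : 0 ≤ c) (h : ∀ p, ∑ i, φ (step p i) ≤ c * φ p) (k : ℕ) (p : α) :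
    ∑ j : Fin k → ι, φ ((List.ofFn j).foldl step p) ≤ c ^ k * φ p := by
  induction k generalizing p with
  | zero => simp
  | succ k ih =>
    rw [← (Fin.consEquiv fun _ => ι).sum_comp, Fintype.sum_prod_type]
    calc ∑ i, ∑ j : Fin k → ι, φ ((List.ofFn (Fin.consEquiv (fun _ => ι) (i, j))).foldl step p)
        = ∑ i, ∑ j : Fin k → ι, φ ((List.ofFn j).foldl step (step p i)) := by
          simp [Fin.consEquiv, List.ofFn_succ]
      _ ≤ ∑ i, c ^ k * φ (step p i) := sum_le_sum fun i _ => ih _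
      _ = c ^ k * ∑ i, φ (step p i) := (mul_sum ..).symm
      _ ≤ c ^ k * (c * φ p) := by gcongr; exact h p
      _ = c ^ (k + 1) * φ p := by ring

lemma exp_neg_pow_le_one_div_eight {x : ℝ} {K : ℕ} (h : 3 ≤ K * x) :
    Real.exp (-x) ^ K ≤ 1 / 8 := by
  have hexp3 : Real.exp (-3) < 1 / 8 := by
    calc Real.exp (-3) = Real.exp (-1) ^ 3 := by rw [← Real.exp_nat_mul]; norm_num
      _ < (1 / 2) ^ 3 := by gcongr; exact Real.exp_neg_one_lt_half
      _ = 1 / 8 := by norm_num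
  calc Real.exp (-x) ^ K = Real.exp (-(K * x)) := by rw [← Real.exp_nat_mul]; ring_nf
    _ ≤ Real.exp (-3) := Real.exp_le_exp.2 (by linarith)
    _ ≤ 1 / 8 := hexp3.le

section Sarah

variable {d n : ℕ} {F : Fin n → EuclideanSpace ℝ (Fin d) → EuclideanSpace ℝ (Fin d)} {ℓ μ γ : ℝ}

lemma sum_eq_smul_opAvg (F : Fin n → EuclideanSpace ℝ (Fin d) → EuclideanSpace ℝ (Fin d))
    (z : EuclideanSpace ℝ (Fin d)) : ∑ i, F i z = (n : ℝ) • opAvg F z := by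
  rcases eq_or_ne n 0 with rfl | hn
  · simp
  · rw [opAvg, smul_smul, mul_inv_cancel₀ (Nat.cast_ne_zero.2 hn), one_smul]

lemma sum_sub_eq_smul_opAvg_sub (F : Fin n → EuclideanSpace ℝ (Fin d) → EuclideanSpace ℝ (Fin d))
    (z' z : EuclideanSpace ℝ (Fin d)) :
    ∑ i, (F i z' - F i z) = (n : ℝ) • (opAvg F z' - opAvg F z) := by
  rw [sum_sub_distrib, sum_eq_smul_opAvg, sum_eq_smul_opAvg, smul_sub]

lemma Cocoercive.norm_sub_sq_le {G : EuclideanSpace ℝ (Fin d) → EuclideanSpace ℝ (Fin d)}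
    (h : Cocoercive ℓ G) (z v : EuclideanSpace ℝ (Fin d)) :
    ‖G (z - γ • v) - G z‖ ^ 2 ≤ -(ℓ * γ) * ⟪G (z - γ • v) - G z, v⟫ := by
  calc _ ≤ _ := h (z - γ • v) z
    _ = _ := by rw [sub_sub_cancel_left, inner_neg_right, real_inner_smul_right]; ring

lemma StronglyMonotone.inner_sub_le {G : EuclideanSpace ℝ (Fin d) → EuclideanSpace ℝ (Fin d)}
    (h : StronglyMonotone μ G) (hγ : 0 < γ) (z v : EuclideanSpace ℝ (Fin d)) :
    ⟪G (z - γ • v) - G z, v⟫ ≤ -(μ * γ) * ‖v‖ ^ 2 := by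
  have h' := h (z - γ • v) z
  rw [sub_sub_cancel_left, norm_neg, norm_smul, Real.norm_of_nonneg hγ.le, inner_neg_right,
    real_inner_smul_right] at h'
  nlinarith

lemma sum_norm_sub_sq_le_of_cocoercive (hco : ∀ i, Cocoercive ℓ (F i))
    (z v : EuclideanSpace ℝ (Fin d)) :
    ∑ i, ‖F i (z - γ • v) - F i z‖ ^ 2
      ≤ -(ℓ * γ) * (n * ⟪opAvg F (z - γ • v) - opAvg F z, v⟫) := by
  calc _ ≤ ∑ i, -(ℓ * γ) * ⟪F i (z - γ • v) - F i z, v⟫ :=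
        sum_le_sum fun i _ => (hco i).norm_sub_sq_le z v
    _ = _ := by rw [← mul_sum, ← sum_inner, sum_sub_eq_smul_opAvg_sub, real_inner_smul_left]

lemma sum_norm_sarahStep_snd_sq_le (hco : ∀ i, Cocoercive ℓ (F i))
    (hsm : StronglyMonotone μ (opAvg F)) (hγ : 0 < γ) (hℓγ : ℓ * γ = 2 / 9)
    (p : EuclideanSpace ℝ (Fin d) × EuclideanSpace ℝ (Fin d)) :
    ∑ i, ‖(sarahStep γ F i p).2‖ ^ 2 ≤ n * Real.exp (-(16 / 9 * μ * γ)) * ‖p.2‖ ^ 2 := by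
  obtain ⟨z, v⟩ := p
  set T := ⟪opAvg F (z - γ • v) - opAvg F z, v⟫
  have hg := sum_norm_sub_sq_le_of_cocoercive (γ := γ) hco z v
  have hT := mul_le_mul_of_nonneg_left (hsm.inner_sub_le hγ z v) (Nat.cast_nonneg n)
  rw [hℓγ] at hg
  calc ∑ i, ‖(sarahStep γ F i (z, v)).2‖ ^ 2
      = ∑ i, ‖F i (z - γ • v) - F i z‖ ^ 2 + 2 * (n * T) + n * ‖v‖ ^ 2 := by
        have h := sum_norm_add_sq (fun i => F i (z - γ • v) - F i z) v
        rwa [sum_sub_eq_smul_opAvg_sub, real_inner_smul_left, Fintype.card_fin] at h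
    _ ≤ n * (1 - 16 / 9 * μ * γ) * ‖v‖ ^ 2 := by nlinarith
    _ ≤ _ := by gcongr; exact Real.one_sub_le_exp_neg _

/-- The weight `1/8` makes the terms `⟨F(z⁺) - F(z), v⟩` of the two summands cancel when
`ℓγ = 2/9`. -/
def sarahLyapunov (F : Fin n → EuclideanSpace ℝ (Fin d) → EuclideanSpace ℝ (Fin d))
    (p : EuclideanSpace ℝ (Fin d) × EuclideanSpace ℝ (Fin d)) : ℝ :=
  ‖opAvg F p.1 - p.2‖ ^ 2 + ‖p.2‖ ^ 2 / 8

lemma sum_sarahLyapunov_sarahStep_le (hco : ∀ i, Cocoercive ℓ (F i)) (hℓγ : ℓ * γ = 2 / 9)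
    (p : EuclideanSpace ℝ (Fin d) × EuclideanSpace ℝ (Fin d)) :
    ∑ i, sarahLyapunov F (sarahStep γ F i p) ≤ n * sarahLyapunov F p := by
  obtain ⟨z, v⟩ := p
  set g := fun i => F i (z - γ • v) - F i z
  have hsum : ∑ i, g i = (Fintype.card (Fin n) : ℝ) • (opAvg F (z - γ • v) - opAvg F z) := by
    rw [Fintype.card_fin]; exact sum_sub_eq_smul_opAvg_sub F _ _
  have hg := sum_norm_sub_sq_le_of_cocoercive (γ := γ) hco z v
  rw [hℓγ] at hg
  have hgap : ∑ i, ‖opAvg F (z - γ • v) - (g i + v)‖ ^ 2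
      ≤ ∑ i, ‖g i‖ ^ 2 + n * ‖opAvg F z - v‖ ^ 2 := by
    have h := sum_norm_sub_add_sq_le hsum (opAvg F z - v)
    rw [Fintype.card_fin] at h
    calc _ = ∑ i, ‖(opAvg F (z - γ • v) - opAvg F z - g i) + (opAvg F z - v)‖ ^ 2 :=
          sum_congr rfl fun i _ => by congr 2; abel
      _ ≤ _ := h
  have hnext := sum_norm_add_sq g v
  rw [hsum, real_inner_smul_left, Fintype.card_fin] at hnext
  simp only [sarahLyapunov, sarahStep, sum_add_distrib, ← sum_div]
  linarith

lemma norm_opAvg_sq_le_sarahLyapunov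
    (F : Fin n → EuclideanSpace ℝ (Fin d) → EuclideanSpace ℝ (Fin d))
    (p : EuclideanSpace ℝ (Fin d) × EuclideanSpace ℝ (Fin d)) :
    ‖opAvg F p.1‖ ^ 2 ≤ 2 * sarahLyapunov F p + 7 / 4 * ‖p.2‖ ^ 2 := by
  have h : ‖opAvg F p.1‖ ≤ ‖opAvg F p.1 - p.2‖ + ‖p.2‖ := norm_le_norm_sub_add _ _
  calc ‖opAvg F p.1‖ ^ 2 ≤ (‖opAvg F p.1 - p.2‖ + ‖p.2‖) ^ 2 := by gcongr
    _ ≤ 2 * (‖opAvg F p.1 - p.2‖ ^ 2 + ‖p.2‖ ^ 2) := add_sq_le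
    _ = _ := by rw [sarahLyapunov]; ring

lemma sarahRun_eq_foldl (p : EuclideanSpace ℝ (Fin d) × EuclideanSpace ℝ (Fin d))
    (l : List (Fin n)) : sarahRun γ F p l = l.foldl (fun p i => sarahStep γ F i p) p := by
  induction l generalizing p with
  | nil => rfl
  | cons i l ih => exact ih _

lemma sarahOuter_eq_foldl (z : EuclideanSpace ℝ (Fin d)) (ls : List (List (Fin n))) :
    sarahOuter γ F z ls = ls.foldl (fun z l => (sarahRun γ F (z, opAvg F z) l).1) z := by
  induction ls generalizing z with
  | nil => rfl
  | cons l ls ih => exact ih _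

lemma sum_norm_opAvg_sarahRun_sq_le (hco : ∀ i, Cocoercive ℓ (F i))
    (hsm : StronglyMonotone μ (opAvg F)) (hγ : 0 < γ) (hℓγ : ℓ * γ = 2 / 9) {K : ℕ}
    (hK : Real.exp (-(16 / 9 * μ * γ)) ^ K ≤ 1 / 8) (z : EuclideanSpace ℝ (Fin d)) :
    ∑ j : Fin K → Fin n, ‖opAvg F (sarahRun γ F (z, opAvg F z) (List.ofFn j)).1‖ ^ 2
      ≤ n ^ K / 2 * ‖opAvg F z‖ ^ 2 := by
  have hv := sum_foldl_ofFn_le_pow_mul _ (fun p => ‖p.2‖ ^ 2) (by positivity)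
    (sum_norm_sarahStep_snd_sq_le hco hsm hγ hℓγ) K (z, opAvg F z)
  have hΦ := sum_foldl_ofFn_le_pow_mul _ (sarahLyapunov F) (Nat.cast_nonneg n)
    (sum_sarahLyapunov_sarahStep_le hco hℓγ) K (z, opAvg F z)
  simp only [← sarahRun_eq_foldl] at hv hΦ
  rw [sarahLyapunov, sub_self, norm_zero] at hΦ
  rw [mul_pow] at hv
  have hnK : (0 : ℝ) ≤ n ^ K * ‖opAvg F z‖ ^ 2 := by positivity
  calc _ ≤ ∑ j : Fin K → Fin n,
        (2 * sarahLyapunov F (sarahRun γ F (z, opAvg F z) (List.ofFn j))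
          + 7 / 4 * ‖(sarahRun γ F (z, opAvg F z) (List.ofFn j)).2‖ ^ 2) :=
        sum_le_sum fun j _ => norm_opAvg_sq_le_sarahLyapunov F _
    _ = 2 * ∑ j : Fin K → Fin n, sarahLyapunov F (sarahRun γ F (z, opAvg F z) (List.ofFn j))
          + 7 / 4 * ∑ j : Fin K → Fin n, ‖(sarahRun γ F (z, opAvg F z) (List.ofFn j)).2‖ ^ 2 := by
        rw [sum_add_distrib, mul_sum, mul_sum]
    _ ≤ _ := by nlinarith [mul_le_mul_of_nonneg_right hK hnK]

lemma sum_norm_opAvg_sarahOuter_sq_le (hco : ∀ i, Cocoercive ℓ (F i))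
    (hsm : StronglyMonotone μ (opAvg F)) (hγ : 0 < γ) (hℓγ : ℓ * γ = 2 / 9) {K : ℕ}
    (hK : Real.exp (-(16 / 9 * μ * γ)) ^ K ≤ 1 / 8) (S : ℕ) (z : EuclideanSpace ℝ (Fin d)) :
    ∑ jj : Fin S → Fin K → Fin n,
        ‖opAvg F (sarahOuter γ F z (List.ofFn fun s => List.ofFn (jj s)))‖ ^ 2
      ≤ (n ^ K / 2) ^ S * ‖opAvg F z‖ ^ 2 := by
  have h := sum_foldl_ofFn_le_pow_mul (fun z j => (sarahRun γ F (z, opAvg F z) (List.ofFn j)).1)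
    (fun z => ‖opAvg F z‖ ^ 2) (by positivity)
    (sum_norm_opAvg_sarahRun_sq_le hco hsm hγ hℓγ hK) S z
  have hlist (jj : Fin S → Fin K → Fin n) :
      (List.ofFn fun s => List.ofFn (jj s)) = (List.ofFn jj).map List.ofFn := by
    rw [List.map_ofFn]; rfl
  simpa only [hlist, sarahOuter_eq_foldl, List.foldl_map] using h

end Sarah

theorem sarah_eps_solution_general {d n : ℕ} (ℓ μ : ℝ) (hℓ : 0 < ℓ)
    (hμ : 0 < μ)
    (F : Fin n → EuclideanSpace ℝ (Fin d) → EuclideanSpace ℝ (Fin d))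
    (hco : ∀ i, Cocoercive ℓ (F i)) (hsm : StronglyMonotone μ (opAvg F))
    (K : ℕ) (hKμ : 10 * ℓ / μ ≤ (K : ℝ)) (S : ℕ)
    (z0 : EuclideanSpace ℝ (Fin d)) (ε : ℝ)
    (hSε : (1 / 2) ^ S * ‖opAvg F z0‖ ^ 2 ≤ ε ^ 2) :
    (∑ jj : Fin S → Fin K → Fin n,
        ‖opAvg F (sarahOuter (2 / (9 * ℓ)) F z0
            (List.ofFn fun s => List.ofFn (jj s)))‖ ^ 2) / (n : ℝ) ^ (S * K)
      ≤ ε ^ 2 := by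
  set γ := 2 / (9 * ℓ) with hγ_def
  have hγ : 0 < γ := by positivity
  have hℓγ : ℓ * γ = 2 / 9 := by rw [hγ_def]; field_simp
  have hK : Real.exp (-(16 / 9 * μ * γ)) ^ K ≤ 1 / 8 := by
    refine exp_neg_pow_le_one_div_eight ?_
    calc (3 : ℝ) ≤ 10 * ℓ / μ * (16 / 9 * μ * γ) := by rw [hγ_def]; field_simp; norm_num
      _ ≤ K * (16 / 9 * μ * γ) := by gcongr
  have hsum := sum_norm_opAvg_sarahOuter_sq_le hco hsm hγ hℓγ hK S z0
  refine div_le_of_le_mul₀ (by positivity) (sq_nonneg ε) ?_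
  calc _ ≤ ((n : ℝ) ^ K / 2) ^ S * ‖opAvg F z0‖ ^ 2 := hsum
    _ = (1 / 2) ^ S * ‖opAvg F z0‖ ^ 2 * (n : ℝ) ^ (S * K) := by
      rw [div_pow, ← pow_mul, mul_comm K S, one_div_pow]; ring
    _ ≤ ε ^ 2 * (n : ℝ) ^ (S * K) := by gcongr

/-- **Corollary (ε-solution).** If each `F_i` is `ℓ`-cocoercive and the average `F` is
`μ`-strongly monotone, then with stepsize `γ = 2/(9ℓ)`, any number of inner steps
`K ≥ 10ℓ/μ`, and any number of epochs `S ≥ 1` with `(1/2)^S ‖F(z̃^0)‖² ≤ ε²`, the SARAH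
outer iterates satisfy `𝔼[‖F(z̃^S)‖²] ≤ ε²`, where the expectation is the uniform
average over all `n^{SK}` tuples of index sequences `(i^1, …, i^S)`. -/
theorem sarah_eps_solution {d n : ℕ} (hn : 1 ≤ n) (ℓ μ : ℝ) (hℓ : 0 < ℓ)
    (hμ : 0 < μ)
    (F : Fin n → EuclideanSpace ℝ (Fin d) → EuclideanSpace ℝ (Fin d))
    (hco : ∀ i, Cocoercive ℓ (F i)) (hsm : StronglyMonotone μ (opAvg F))
    (K : ℕ) (hKμ : 10 * ℓ / μ ≤ (K : ℝ)) (S : ℕ) (hS : 1 ≤ S)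
    (z0 : EuclideanSpace ℝ (Fin d)) (ε : ℝ) (hε : 0 < ε)
    (hSε : (1 / 2) ^ S * ‖opAvg F z0‖ ^ 2 ≤ ε ^ 2) :
    (∑ jj : Fin S → Fin K → Fin n,
        ‖opAvg F (sarahOuter (2 / (9 * ℓ)) F z0
            (List.ofFn fun s => List.ofFn (jj s)))‖ ^ 2) / (n : ℝ) ^ (S * K)
      ≤ ε ^ 2 :=
  sarah_eps_solution_general ℓ μ hℓ hμ F hco hsm K hKμ S z0 ε hSε
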